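/- The periodicity function of the Thue–Morse word admits the following linear representation: let v = [1,0,1,0,0,0] (a 1×6 integer row vector), w = [1,1,0,1,1,0]ᵀ (a 6×1 integer column vector), and let M₀ and M₁ be the 6×6 integer matrices M₀ = [[1,0,1,0,0,0],[0,0,0,0,1,1],[0,0,0,0,0,0],[0,0,0,0,0,2],[0,1,0,1,0,0],[0,0,0,0,0,2]] and M₁ = [[0,1,0,1,0,0],[0,1,0,1,0,0],[0,0,0,1,0,0],[0,0,0,2,0,0],[0,1,0,1,0,0],[0,0,0,2,0,0]]. Then for every i ≥ 1 with binary representation i_{ℓ−1} i_{ℓ−2} ⋯ i_0 (most significant digit first), p_t(i) = v · M_{i_{ℓ−1}} M_{i_{ℓ−2}} ⋯ M_{i_0} · w. -/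
import Mathlib


open Finset Filter Asymptotics

/-- `n` is a local period of the infinite word `w` at position `i`:
`n ≥ 1` and either (`n ≤ i` and `w_{i+k} = w_{i-n+k}` for all `k < n`)
or (`n > i` and `w_k = w_{n+k}` for all `k < i`). -/
def IsLocalPeriodAt {α : Type*} (w : ℕ → α) (i n : ℕ) : Prop :=
  1 ≤ n ∧ ((n ≤ i ∧ ∀ k < n, w (i + k) = w (i - n + k)) ∨
           (i < n ∧ ∀ k < i, w k = w (n + k)))

/-- The periodicity function `p_w(i)`: the least local period of `w` at `i`. -/
noncomputable def perFn {α : Type*} (w : ℕ → α) (i : ℕ) : ℕ :=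
  sInf {n | IsLocalPeriodAt w i n}

/-- The summatory function `P_w(n) = ∑_{j<n} p_w(j)`. -/
noncomputable def sumFn {α : Type*} (w : ℕ → α) (n : ℕ) : ℕ :=
  ∑ j ∈ Finset.range n, perFn w j

/-- The periodic complexity `h_w(n) = P_w(n)/n`. -/
noncomputable def perComplexity {α : Type*} (w : ℕ → α) (n : ℕ) : ℝ :=
  (sumFn w n : ℝ) / n

/-- The Thue–Morse word: `t_i = 0` iff the number of 1's in the binary
representation of `i` is even. -/
def tm (i : ℕ) : ℕ :=
  if Even ((Nat.digits 2 i).count 1) then 0 else 1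

/-- The matrix product `M_{i_{l-1}} M_{i_{l-2}} ⋯ M_{i_0}` over the binary
representation of `i`, most significant digit first. -/
def digitMatProd (M0 M1 : Matrix (Fin 6) (Fin 6) ℤ) (i : ℕ) : Matrix (Fin 6) (Fin 6) ℤ :=
  (((Nat.digits 2 i).reverse).map (fun d => if d = 1 then M1 else M0)).prod

lemma tm_le_one (n : ℕ) : tm n ≤ 1 := by unfold tm; split <;> omega

lemma tm_zero : tm 0 = 0 := by simp [tm]

lemma tm_one : tm 1 = 1 := by
  unfold tm
  rw [Nat.digits_def' (by norm_num : 1 < 2) (by norm_num)]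
  norm_num

lemma tm_two_mul (n : ℕ) : tm (2 * n) = tm n := by
  rcases Nat.eq_zero_or_pos n with h | h
  · simp [h]
  unfold tm
  rw [Nat.digits_def' (by norm_num : 1 < 2) (by omega)]
  simp [Nat.mul_div_cancel_left _ (by norm_num : 0 < 2), Nat.mul_mod_right]

lemma tm_two_mul_add_one (n : ℕ) : tm (2 * n + 1) = 1 - tm n := by
  unfold tm
  rw [Nat.digits_def' (by norm_num : 1 < 2) (by omega)]
  have h1 : (2 * n + 1) % 2 = 1 := by omega
  have h2 : (2 * n + 1) / 2 = n := by omega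
  rw [h1, h2]
  simp only [List.count_cons, Nat.even_add_one, if_pos rfl]
  rcases Nat.even_or_odd ((Nat.digits 2 n).count 1) with h | h
  · simp [h, Nat.even_add_one]
  · simp [h, Nat.not_even_iff_odd.2 h, Nat.even_add_one]

/-- No square of odd period at an even position. -/
lemma sq_odd_even_false (n p : ℕ) (hn : Odd n) (hp : Even p)
    (H : ∀ k < n, tm (p + k) = tm (p + n + k)) : False := by
  obtain ⟨n', rfl⟩ := hn
  obtain ⟨q, rfl⟩ := hp
  have step : ∀ k < 2 * n' + 1, tm (q + q + k) ≠ tm (q + q + k + 1) := by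
    intro k hk
    rcases Nat.even_or_odd k with hke | hko
    · obtain ⟨j, rfl⟩ := hke
      have e1 : q + q + (j + j) = 2 * (q + j) := by ring
      have e2 : q + q + (j + j) + 1 = 2 * (q + j) + 1 := by ring
      rw [e2, e1, tm_two_mul, tm_two_mul_add_one]
      have := tm_le_one (q + j); omega
    · obtain ⟨j, rfl⟩ := hko
      have h1 : 2 * j + 1 + 1 < 2 * n' + 1 := by omega
      have e1 := H (2 * j + 1) hk
      have e2 := H (2 * j + 1 + 1) h1
      have e3 : q + q + (2 * n' + 1) + (2 * j + 1) = 2 * (q + n' + j + 1) := by ring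
      have e4 : q + q + (2 * n' + 1) + (2 * j + 1 + 1) = 2 * (q + n' + j + 1) + 1 := by ring
      rw [e3] at e1
      rw [e4] at e2
      rw [tm_two_mul] at e1
      rw [tm_two_mul_add_one] at e2
      have e5 : q + q + (2 * j + 1) + 1 = q + q + (2 * j + 1 + 1) := by ring
      rw [e1, e5, e2]
      have := tm_le_one (q + n' + j + 1); omega
  -- alternation
  have alt : ∀ k ≤ 2 * n' + 1,
      tm (q + q + k) = if Even k then tm (q + q) else 1 - tm (q + q) := by
    intro k
    induction k with
    | zero => simp
    | succ k ih =>
      intro hk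
      have ih' := ih (by omega)
      have hs := step k (by omega)
      have h01 := tm_le_one (q + q)
      have h02 := tm_le_one (q + q + k)
      have h03 := tm_le_one (q + q + k + 1)
      have e0 : q + q + (k + 1) = q + q + k + 1 := by ring
      rw [e0]
      rcases Nat.even_or_odd k with h | h
      · rw [if_pos h] at ih'
        rw [if_neg (by simp [Nat.even_add_one, h])]
        omega
      · rw [if_neg (Nat.not_even_iff_odd.2 h)] at ih'
        rw [if_pos (by simp [Nat.even_add_one, Nat.not_even_iff_odd.2 h])]
        omega
  have h0 := H 0 (by omega)
  have hN := alt (2 * n' + 1) le_rfl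
  rw [if_neg (by simp [Nat.even_add_one, parity_simps])] at hN
  simp only [Nat.add_zero] at h0
  have := tm_le_one (q + q)
  omega

/-- Thue–Morse is overlap-free. -/
lemma overlap_false : ∀ n, 1 ≤ n → ∀ p, (∀ k ≤ n, tm (p + k) = tm (p + n + k)) → False := by
  intro n
  induction n using Nat.strong_induction_on with
  | _ n ih =>
  intro hn p H
  rcases Nat.even_or_odd n with hne | hno
  · -- n even
    obtain ⟨n', rfl⟩ := hne
    rcases Nat.even_or_odd p with hpe | hpo
    · obtain ⟨q, rfl⟩ := hpe
      refine ih n' (by omega) (by omega) q ?_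
      intro k hk
      have := H (2 * k) (by omega)
      have e1 : q + q + 2 * k = 2 * (q + k) := by ring
      have e2 : q + q + (n' + n') + 2 * k = 2 * (q + n' + k) := by ring
      rw [e1, e2, tm_two_mul, tm_two_mul] at this
      convert this using 2 <;> ring
    · obtain ⟨q, rfl⟩ := hpo
      refine ih n' (by omega) (by omega) q ?_
      intro k hk
      have := H (2 * k) (by omega)
      have e1 : 2 * q + 1 + 2 * k = 2 * (q + k) + 1 := by ring
      have e2 : 2 * q + 1 + (n' + n') + 2 * k = 2 * (q + n' + k) + 1 := by ring
      rw [e1, e2, tm_two_mul_add_one, tm_two_mul_add_one] at this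
      have h1 := tm_le_one (q + k)
      have h2 := tm_le_one (q + n' + k)
      have e3 : q + n' + k = q + n' + k := rfl
      omega
  · -- n odd
    rcases Nat.even_or_odd p with hpe | hpo
    · exact sq_odd_even_false n p hno hpe (fun k hk => H k (le_of_lt hk))
    · refine sq_odd_even_false n (p + 1) hno (by simpa [Nat.even_add_one] using hpo) ?_
      intro k hk
      have := H (k + 1) (by omega)
      convert this using 2 <;> ring

lemma tm_two : tm 2 = 1 := by rw [show (2:ℕ) = 2*1 from rfl, tm_two_mul, tm_one]

/-- `t_{3·2^ℓ + k} = t_k` for `k < 2^{ℓ+1}`. -/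
lemma tm_three_pow : ∀ ℓ : ℕ, ∀ k < 2 ^ (ℓ + 1), tm (3 * 2 ^ ℓ + k) = tm k := by
  intro ℓ
  induction ℓ with
  | zero =>
    intro k hk
    interval_cases k
    · rw [show 3 * 2 ^ 0 + 0 = 2 * 1 + 1 from rfl, tm_two_mul_add_one, tm_one, tm_zero]
    · rw [show 3 * 2 ^ 0 + 1 = 2 * 2 from rfl, tm_two_mul, tm_two, tm_one]
  | succ ℓ ih =>
    intro k hk
    rcases Nat.even_or_odd k with hke | hko
    · obtain ⟨m, rfl⟩ := hke
      have e1 : 3 * 2 ^ (ℓ + 1) + (m + m) = 2 * (3 * 2 ^ ℓ + m) := by ring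
      have e2 : m + m = 2 * m := by ring
      rw [e1, e2, tm_two_mul, tm_two_mul, ih m (by rw [pow_succ] at hk; omega)]
    · obtain ⟨m, rfl⟩ := hko
      have e1 : 3 * 2 ^ (ℓ + 1) + (2 * m + 1) = 2 * (3 * 2 ^ ℓ + m) + 1 := by ring
      rw [e1, tm_two_mul_add_one, tm_two_mul_add_one, ih m (by rw [pow_succ] at hk; omega)]

/-- For `2^ℓ < n < 3·2^ℓ` the prefix of length `2^ℓ + 1` does not occur at `n`. -/
lemma prefix_mismatch : ∀ ℓ n : ℕ, 2 ^ ℓ < n → n < 3 * 2 ^ ℓ →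
    ∃ k ≤ 2 ^ ℓ, tm k ≠ tm (n + k) := by
  intro ℓ
  induction ℓ with
  | zero =>
    intro n h1 h2
    have : n = 2 := by omega
    subst this
    exact ⟨0, by omega, by rw [tm_zero, tm_two]; omega⟩
  | succ ℓ ih =>
    intro n h1 h2
    rcases Nat.even_or_odd n with hne | hno
    · obtain ⟨n', rfl⟩ := hne
      obtain ⟨k, hk, hne⟩ := ih n' (by rw [pow_succ] at h1; omega) (by rw [pow_succ] at h2; omega)
      refine ⟨2 * k, by rw [pow_succ]; omega, ?_⟩
      have e1 : n' + n' + 2 * k = 2 * (n' + k) := by ring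
      rw [e1, show 2*k = 2*k from rfl, tm_two_mul, tm_two_mul]
      exact hne
    · -- n odd : tm n = 0, tm (n+1) = 1, tm (n+2) = 1 is impossible
      obtain ⟨u, rfl⟩ := hno
      have h2p : (2:ℕ) ≤ 2 ^ (ℓ + 1) := by
        have := Nat.one_le_two_pow (n := ℓ); rw [pow_succ]; omega
      by_contra hcon
      push_neg at hcon
      have c0 := hcon 0 (by omega)
      have c1 := hcon 1 (by omega)
      have c2 := hcon 2 (by omega)
      rw [Nat.add_zero, tm_zero] at c0
      rw [tm_one] at c1
      rw [tm_two] at c2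
      have e1 : 2 * u + 1 + 1 = 2 * (u + 1) := by ring
      have e2 : 2 * u + 1 + 2 = 2 * (u + 1) + 1 := by ring
      rw [tm_two_mul_add_one] at c0
      rw [e1, tm_two_mul] at c1
      rw [e2, tm_two_mul_add_one] at c2
      have := tm_le_one u
      have := tm_le_one (u + 1)
      omega

/-- No square (in the local-period sense) at an odd center. -/
lemma no_square_at_odd (i n : ℕ) (hi : Odd i) (hn1 : 1 ≤ n) (hni : n ≤ i)
    (H : ∀ k < n, tm (i + k) = tm (i - n + k)) : False := by
  set p := i - n with hp
  have hpn : p + n = i := by omega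
  have H' : ∀ k < n, tm (p + k) = tm (p + n + k) := by
    intro k hk
    rw [hpn]
    exact (H k hk).symm
  rcases Nat.even_or_odd n with hne | hno
  · -- n even, p odd (since p + n = i odd)
    obtain ⟨n', hn'⟩ := hne
    have hn'' : n = 2 * n' := by omega
    have hpo : Odd p := by
      rcases Nat.even_or_odd p with h | h
      · exfalso; obtain ⟨a, ha⟩ := h; obtain ⟨b, hb⟩ := hi; omega
      · exact h
    obtain ⟨q, hq⟩ := hpo
    refine overlap_false n' (by omega) q ?_
    intro j hj
    rcases Nat.eq_or_lt_of_le hj with hj' | hj'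
    · -- j = n' : use k = 2*(n'-1)+1
      subst hj'
      have := H' (2 * (j - 1) + 1) (by omega)
      have e1 : p + (2 * (j - 1) + 1) = 2 * (q + j) := by omega
      have e2 : p + n + (2 * (j - 1) + 1) = 2 * (q + j + j) := by omega
      rw [e1, e2, tm_two_mul, tm_two_mul] at this
      convert this using 2 <;> omega
    · have := H' (2 * j) (by omega)
      have e1 : p + 2 * j = 2 * (q + j) + 1 := by omega
      have e2 : p + n + 2 * j = 2 * (q + n' + j) + 1 := by omega
      rw [e1, e2, tm_two_mul_add_one, tm_two_mul_add_one] at this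
      have h1 := tm_le_one (q + j)
      have h2 := tm_le_one (q + n' + j)
      omega
  · -- n odd, p even
    have hpe : Even p := by
      rcases Nat.even_or_odd p with h | h
      · exact h
      · exfalso; obtain ⟨a, ha⟩ := h; obtain ⟨b, hb⟩ := hi; obtain ⟨c, hc⟩ := hno; omega
    exact sq_odd_even_false n p hno hpe H'

lemma perFn_odd (i : ℕ) (hi : Odd i) : perFn tm i = 3 * 2 ^ (Nat.log 2 i) := by
  have hi1 : 1 ≤ i := hi.pos
  set ℓ := Nat.log 2 i with hℓ
  have h2l : 2 ^ ℓ ≤ i := Nat.pow_log_le_self 2 (by omega)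
  have hlt : i < 2 ^ (ℓ + 1) := Nat.lt_pow_succ_log_self (by norm_num) i
  have hpow : (2:ℕ) ^ (ℓ + 1) = 2 * 2 ^ ℓ := by rw [pow_succ]; ring
  have mem : IsLocalPeriodAt tm i (3 * 2 ^ ℓ) := by
    refine ⟨by have := Nat.one_le_two_pow (n := ℓ); omega, Or.inr ⟨by omega, ?_⟩⟩
    intro k hk
    exact (tm_three_pow ℓ k (by omega)).symm
  have lower : ∀ n, IsLocalPeriodAt tm i n → 3 * 2 ^ ℓ ≤ n := by
    intro n hmem
    by_contra hcon
    push_neg at hcon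
    obtain ⟨hn1, hcase⟩ := hmem
    rcases hcase with ⟨hni, hsq⟩ | ⟨hin, hpre⟩
    · exact no_square_at_odd i n hi hn1 hni hsq
    · -- i < n < 3·2^ℓ
      rcases Nat.eq_zero_or_pos ℓ with h0 | h0
      · -- ℓ = 0 : i = 1, n = 2
        rw [h0] at h2l hlt hcon
        have hi1' : i = 1 := by omega
        have hn2 : n = 2 := by omega
        have := hpre 0 (by omega)
        rw [hi1', hn2] at *
        rw [tm_zero, tm_two] at this
        omega
      · obtain ⟨k, hk, hne⟩ := prefix_mismatch ℓ n (by omega) (by omega)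
        have h2even : 2 ^ ℓ < i := by
          rcases Nat.eq_or_lt_of_le h2l with h | h
          · exfalso
            obtain ⟨b, hb⟩ := hi
            have : Even (2 ^ ℓ) := by
              refine (Nat.even_pow).2 ⟨even_two, by omega⟩
            obtain ⟨c, hc⟩ := this
            omega
          · exact h
        exact hne (hpre k (by omega))
  have hne : {n | IsLocalPeriodAt tm i n}.Nonempty := ⟨_, mem⟩
  have hmem' := Nat.sInf_mem hne
  exact le_antisymm (Nat.sInf_le mem) (lower _ hmem')

lemma perFn_even_one (m : ℕ) (hm : 1 ≤ m) (h : tm m ≠ tm (m - 1)) : perFn tm (2 * m) = 1 := by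
  have mem : IsLocalPeriodAt tm (2 * m) 1 := by
    refine ⟨le_rfl, Or.inl ⟨by omega, ?_⟩⟩
    intro k hk
    have hk0 : k = 0 := by omega
    subst hk0
    have e1 : 2 * m + 0 = 2 * m := by ring
    have e2 : 2 * m - 1 + 0 = 2 * (m - 1) + 1 := by omega
    rw [e1, e2, tm_two_mul, tm_two_mul_add_one]
    have := tm_le_one (m - 1)
    have := tm_le_one m
    omega
  have hne : {n | IsLocalPeriodAt tm (2 * m) n}.Nonempty := ⟨_, mem⟩
  have hmem' := Nat.sInf_mem hne
  exact le_antisymm (Nat.sInf_le mem) hmem'.1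

lemma perFn_even_two (m : ℕ) (hm : 1 ≤ m) (h : tm m = tm (m - 1)) : perFn tm (2 * m) = 2 := by
  have hlm := tm_le_one m
  have hlm1 := tm_le_one (m - 1)
  have htm1 : tm (2 * m) ≠ tm (2 * m - 1) := by
    have e2 : 2 * m - 1 = 2 * (m - 1) + 1 := by omega
    rw [e2, tm_two_mul, tm_two_mul_add_one]
    omega
  have mem : IsLocalPeriodAt tm (2 * m) 2 := by
    refine ⟨by omega, Or.inl ⟨by omega, ?_⟩⟩
    intro k hk
    interval_cases k
    · have e1 : 2 * m + 0 = 2 * m := by ring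
      have e2 : 2 * m - 2 + 0 = 2 * (m - 1) := by omega
      rw [e1, e2, tm_two_mul, tm_two_mul]
      omega
    · have e1 : 2 * m + 1 = 2 * m + 1 := rfl
      have e2 : 2 * m - 2 + 1 = 2 * (m - 1) + 1 := by omega
      rw [e2, tm_two_mul_add_one, tm_two_mul_add_one]
      omega
  have hne : {n | IsLocalPeriodAt tm (2 * m) n}.Nonempty := ⟨_, mem⟩
  have hmem' := Nat.sInf_mem hne
  have h1 : sInf {n | IsLocalPeriodAt tm (2 * m) n} ≠ 1 := by
    intro hc
    have := hmem'
    rw [hc] at this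
    obtain ⟨-, hcase⟩ := this
    rcases hcase with ⟨-, hsq⟩ | ⟨hlt, -⟩
    · have := hsq 0 (by omega)
      simp only [Nat.add_zero] at this
      exact htm1 this
    · omega
  have h2 := hmem'.1
  have h3 : sInf {n | IsLocalPeriodAt tm (2 * m) n} ≤ 2 := Nat.sInf_le mem
  show sInf {n | IsLocalPeriodAt tm (2 * m) n} = 2
  omega
section vecsimp
variable {α : Type*} (a b c d e f : α)
@[simp] lemma vec6_0 : ![a,b,c,d,e,f] 0 = a := rfl
@[simp] lemma vec6_1 : ![a,b,c,d,e,f] 1 = b := rfl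
@[simp] lemma vec6_2 : ![a,b,c,d,e,f] 2 = c := rfl
@[simp] lemma vec6_3 : ![a,b,c,d,e,f] 3 = d := rfl
@[simp] lemma vec6_4 : ![a,b,c,d,e,f] 4 = e := rfl
@[simp] lemma vec6_5 : ![a,b,c,d,e,f] 5 = f := rfl
end vecsimp

def Mz : Matrix (Fin 6) (Fin 6) ℤ :=
  !![1,0,1,0,0,0; 0,0,0,0,1,1; 0,0,0,0,0,0; 0,0,0,0,0,2; 0,1,0,1,0,0; 0,0,0,0,0,2]
def Mo : Matrix (Fin 6) (Fin 6) ℤ :=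
  !![0,1,0,1,0,0; 0,1,0,1,0,0; 0,0,0,1,0,0; 0,0,0,2,0,0; 0,1,0,1,0,0; 0,0,0,2,0,0]
def Vr : Matrix (Fin 1) (Fin 6) ℤ := !![1,0,1,0,0,0]
def Wc : Matrix (Fin 6) (Fin 1) ℤ := !![1;1;0;1;1;0]

lemma dmp_zero (A B : Matrix (Fin 6) (Fin 6) ℤ) : digitMatProd A B 0 = 1 := by
  simp [digitMatProd]

lemma dmp_odd (A B : Matrix (Fin 6) (Fin 6) ℤ) (m : ℕ) :
    digitMatProd A B (2 * m + 1) = digitMatProd A B m * B := by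
  unfold digitMatProd
  rw [Nat.digits_def' (by norm_num : 1 < 2) (by omega)]
  have h1 : (2 * m + 1) % 2 = 1 := by omega
  have h2 : (2 * m + 1) / 2 = m := by omega
  rw [h1, h2]
  simp

lemma dmp_even (A B : Matrix (Fin 6) (Fin 6) ℤ) (m : ℕ) (hm : 1 ≤ m) :
    digitMatProd A B (2 * m) = digitMatProd A B m * A := by
  unfold digitMatProd
  rw [Nat.digits_def' (by norm_num : 1 < 2) (by omega)]
  have h1 : (2 * m) % 2 = 0 := by omega
  have h2 : (2 * m) / 2 = m := by omega
  rw [h1, h2]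
  simp

lemma rowMz1 (x : ℤ) : !![0,1,0,x,0,0] * Mz = !![0,0,0,0,1,2*x+1] := by
  ext i j
  rw [Matrix.mul_apply, Fin.sum_univ_six]
  fin_cases i <;> fin_cases j <;> simp [Mz, Matrix.vecHead, Matrix.vecTail] <;> (try ring) <;> (try exact Or.inr rfl) <;> (try rfl)

lemma rowMz2 (x : ℤ) : !![0,0,0,0,1,x] * Mz = !![0,1,0,1,0,2*x] := by
  ext i j
  rw [Matrix.mul_apply, Fin.sum_univ_six]
  fin_cases i <;> fin_cases j <;> simp [Mz, Matrix.vecHead, Matrix.vecTail] <;> (try ring) <;> (try exact Or.inr rfl) <;> (try rfl)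

lemma rowMz3 (x : ℤ) : !![0,1,0,1,0,x] * Mz = !![0,0,0,0,1,2*x+3] := by
  ext i j
  rw [Matrix.mul_apply, Fin.sum_univ_six]
  fin_cases i <;> fin_cases j <;> simp [Mz, Matrix.vecHead, Matrix.vecTail] <;> (try ring) <;> (try exact Or.inr rfl) <;> (try rfl)

lemma rowMo1 (x : ℤ) : !![0,1,0,x,0,0] * Mo = !![0,1,0,2*x+1,0,0] := by
  ext i j
  rw [Matrix.mul_apply, Fin.sum_univ_six]
  fin_cases i <;> fin_cases j <;> simp [Mo, Matrix.vecHead, Matrix.vecTail] <;> (try ring) <;> (try exact Or.inr rfl) <;> (try rfl)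

lemma rowMo2 (x : ℤ) : !![0,0,0,0,1,x] * Mo = !![0,1,0,2*x+1,0,0] := by
  ext i j
  rw [Matrix.mul_apply, Fin.sum_univ_six]
  fin_cases i <;> fin_cases j <;> simp [Mo, Matrix.vecHead, Matrix.vecTail] <;> (try ring) <;> (try exact Or.inr rfl) <;> (try rfl)

lemma rowMo3 (x : ℤ) : !![0,1,0,1,0,x] * Mo = !![0,1,0,2*x+3,0,0] := by
  ext i j
  rw [Matrix.mul_apply, Fin.sum_univ_six]
  fin_cases i <;> fin_cases j <;> simp [Mo, Matrix.vecHead, Matrix.vecTail] <;> (try ring) <;> (try exact Or.inr rfl) <;> (try rfl)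

lemma baseRow : Vr * Mo = !![0,1,0,2,0,0] := by
  ext i j
  rw [Matrix.mul_apply, Fin.sum_univ_six]
  fin_cases i <;> fin_cases j <;> simp [Vr, Mo, Matrix.vecHead, Matrix.vecTail]

lemma rowW1 (x : ℤ) : (!![0,1,0,x,0,0] * Wc) 0 0 = 1 + x := by
  rw [Matrix.mul_apply, Fin.sum_univ_six]
  simp [Wc, Matrix.vecHead, Matrix.vecTail]
  try exact Or.inr rfl

lemma rowW2 (x : ℤ) : (!![0,0,0,0,1,x] * Wc) 0 0 = 1 := by
  rw [Matrix.mul_apply, Fin.sum_univ_six]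
  simp [Wc, Matrix.vecHead, Matrix.vecTail]
  try exact Or.inr rfl

lemma rowW3 (x : ℤ) : (!![0,1,0,1,0,x] * Wc) 0 0 = 2 := by
  rw [Matrix.mul_apply, Fin.sum_univ_six]
  simp [Wc, Matrix.vecHead, Matrix.vecTail]
  try exact Or.inr rfl
  try norm_num

def Ei (i : ℕ) : ℤ := 3 * 2 ^ (Nat.log 2 i)

lemma Ei_one : Ei 1 = 3 := by simp [Ei, Nat.log_one_right]

lemma log_double (m : ℕ) (hm : 1 ≤ m) :
    Nat.log 2 (2 * m) = Nat.log 2 m + 1 ∧ Nat.log 2 (2 * m + 1) = Nat.log 2 m + 1 := by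
  have h1 := Nat.pow_log_le_self 2 (by omega : m ≠ 0)
  have h2 := Nat.lt_pow_succ_log_self (by norm_num : 1 < 2) m
  have e1 : (2:ℕ) ^ (Nat.log 2 m + 1) = 2 ^ (Nat.log 2 m) * 2 := pow_succ 2 _
  have e2 : (2:ℕ) ^ (Nat.log 2 m + 1 + 1) = 2 ^ (Nat.log 2 m) * 2 * 2 := by
    rw [pow_succ, pow_succ]
  constructor <;>
    exact Nat.log_eq_of_pow_le_of_lt_pow (by omega) (by omega)

lemma Ei_double (m : ℕ) (hm : 1 ≤ m) : Ei (2 * m) = 2 * Ei m := by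
  unfold Ei
  rw [(log_double m hm).1, pow_succ]
  ring

lemma Ei_double' (m : ℕ) (hm : 1 ≤ m) : Ei (2 * m + 1) = 2 * Ei m := by
  unfold Ei
  rw [(log_double m hm).2, pow_succ]
  ring

lemma tm_pred_odd (m : ℕ) (hmo : Odd m) : tm m ≠ tm (m - 1) := by
  obtain ⟨u, rfl⟩ := hmo
  have e1 : 2 * u + 1 - 1 = 2 * u := by omega
  rw [e1, tm_two_mul, tm_two_mul_add_one]
  have := tm_le_one u
  omega

lemma tm_double_pred (m : ℕ) (hm : 1 ≤ m) :
    tm (2 * m) = tm (2 * m - 1) ↔ tm m ≠ tm (m - 1) := by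
  have e1 : 2 * m - 1 = 2 * (m - 1) + 1 := by omega
  rw [e1, tm_two_mul, tm_two_mul_add_one]
  have := tm_le_one m
  have := tm_le_one (m - 1)
  omega

lemma rowInv : ∀ i : ℕ, 1 ≤ i →
    (Odd i → Vr * digitMatProd Mz Mo i = !![0, 1, 0, Ei i - 1, 0, 0]) ∧
    (Even i → tm i = tm (i - 1) → Vr * digitMatProd Mz Mo i = !![0, 0, 0, 0, 1, Ei i - 1]) ∧
    (Even i → tm i ≠ tm (i - 1) → Vr * digitMatProd Mz Mo i = !![0, 1, 0, 1, 0, Ei i - 2]) := by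
  intro i
  induction i using Nat.strong_induction_on with
  | _ i ih =>
  intro hi
  rcases Nat.lt_or_ge i 2 with h2 | h2
  · -- i = 1
    have h1 : i = 1 := by omega
    subst h1
    have hd : digitMatProd Mz Mo 1 = Mo := by
      have := dmp_odd Mz Mo 0
      rw [show 2 * 0 + 1 = 1 from rfl, dmp_zero, one_mul] at this
      exact this
    refine ⟨fun _ => ?_, fun h => absurd h (by decide), fun h => absurd h (by decide)⟩
    rw [hd, baseRow, Ei_one]
    norm_num
  · rcases Nat.even_or_odd i with he | ho
    · -- i = 2 * m
      obtain ⟨m, hm'⟩ := he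
      have hmi : i = 2 * m := by omega
      subst hmi
      have hm1 : 1 ≤ m := by omega
      have hdm := dmp_even Mz Mo m hm1
      have hEd := Ei_double m hm1
      have hIH := ih m (by omega) hm1
      have hassoc : Vr * digitMatProd Mz Mo (2 * m) = (Vr * digitMatProd Mz Mo m) * Mz := by
        rw [hdm, Matrix.mul_assoc]
      have hnotodd : ¬ Odd (2 * m) := by simp [Nat.even_mul]
      rcases Nat.even_or_odd m with hme | hmo
      · -- m even
        by_cases htm : tm m = tm (m - 1)
        · -- R m = A2, result is A3 (ne case)
          have hr := hIH.2.1 hme htm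
          have hres : Vr * digitMatProd Mz Mo (2 * m) = !![0, 1, 0, 1, 0, Ei (2*m) - 2] := by
            rw [hassoc, hr, rowMz2]
            rw [show 2 * (Ei m - 1) = Ei (2*m) - 2 by rw [hEd]; ring]
          have hne : tm (2 * m) ≠ tm (2 * m - 1) :=
            fun hc => (tm_double_pred m hm1).1 hc htm
          exact ⟨fun h => absurd h hnotodd, fun _ h => absurd h hne, fun _ _ => hres⟩
        · -- R m = A3, result is A2 (eq case)
          have hr := hIH.2.2 hme htm
          have hres : Vr * digitMatProd Mz Mo (2 * m) = !![0, 0, 0, 0, 1, Ei (2*m) - 1] := by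
            rw [hassoc, hr, rowMz3]
            rw [show 2 * (Ei m - 2) + 3 = Ei (2*m) - 1 by rw [hEd]; ring]
          have heq : tm (2 * m) = tm (2 * m - 1) := (tm_double_pred m hm1).2 htm
          exact ⟨fun h => absurd h hnotodd, fun _ _ => hres, fun _ h => absurd heq h⟩
      · -- m odd : R m = A1, result is A2 (eq case)
        have hr := hIH.1 hmo
        have hres : Vr * digitMatProd Mz Mo (2 * m) = !![0, 0, 0, 0, 1, Ei (2*m) - 1] := by
          rw [hassoc, hr, rowMz1]
          rw [show 2 * (Ei m - 1) + 1 = Ei (2*m) - 1 by rw [hEd]; ring]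
        have heq : tm (2 * m) = tm (2 * m - 1) :=
          (tm_double_pred m hm1).2 (tm_pred_odd m hmo)
        exact ⟨fun h => absurd h hnotodd, fun _ _ => hres, fun _ h => absurd heq h⟩
    · -- i = 2 * m + 1, m ≥ 1
      obtain ⟨m, rfl⟩ := ho
      have hm1 : 1 ≤ m := by omega
      have hdm := dmp_odd Mz Mo m
      have hEd := Ei_double' m hm1
      have hIH := ih m (by omega) hm1
      have hassoc : Vr * digitMatProd Mz Mo (2 * m + 1) = (Vr * digitMatProd Mz Mo m) * Mo := by
        rw [hdm, Matrix.mul_assoc]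
      have hnoteven : ¬ Even (2 * m + 1) := by simp [Nat.even_add_one, Nat.even_mul]
      have hres : Vr * digitMatProd Mz Mo (2 * m + 1) = !![0, 1, 0, Ei (2*m+1) - 1, 0, 0] := by
        rcases Nat.even_or_odd m with hme | hmo
        · by_cases htm : tm m = tm (m - 1)
          · rw [hassoc, hIH.2.1 hme htm, rowMo2]
            rw [show 2 * (Ei m - 1) + 1 = Ei (2*m+1) - 1 by rw [hEd]; ring]
          · rw [hassoc, hIH.2.2 hme htm, rowMo3]
            rw [show 2 * (Ei m - 2) + 3 = Ei (2*m+1) - 1 by rw [hEd]; ring]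
        · rw [hassoc, hIH.1 hmo, rowMo1]
          rw [show 2 * (Ei m - 1) + 1 = Ei (2*m+1) - 1 by rw [hEd]; ring]
      exact ⟨fun _ => hres, fun h => absurd h hnoteven, fun h => absurd h hnoteven⟩

theorem tm_perFn_linear_representation :
    ∀ i : ℕ, 1 ≤ i →
      (perFn tm i : ℤ) =
        ((!![1, 0, 1, 0, 0, 0] : Matrix (Fin 1) (Fin 6) ℤ) *
            digitMatProd
              !![1, 0, 1, 0, 0, 0;
                 0, 0, 0, 0, 1, 1;
                 0, 0, 0, 0, 0, 0;
                 0, 0, 0, 0, 0, 2;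
                 0, 1, 0, 1, 0, 0;
                 0, 0, 0, 0, 0, 2]
              !![0, 1, 0, 1, 0, 0;
                 0, 1, 0, 1, 0, 0;
                 0, 0, 0, 1, 0, 0;
                 0, 0, 0, 2, 0, 0;
                 0, 1, 0, 1, 0, 0;
                 0, 0, 0, 2, 0, 0] i *
            (!![1; 1; 0; 1; 1; 0] : Matrix (Fin 6) (Fin 1) ℤ)) 0 0 := by
  intro i hi
  obtain ⟨h1, h2, h3⟩ := rowInv i hi
  show (perFn tm i : ℤ) = (Vr * digitMatProd Mz Mo i * Wc) 0 0
  rcases Nat.even_or_odd i with he | ho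
  · obtain ⟨m, hm'⟩ := he
    have hmi : i = 2 * m := by omega
    subst hmi
    have hm1 : 1 ≤ m := by omega
    by_cases htm : tm (2 * m) = tm (2 * m - 1)
    · rw [h2 (by exact ⟨m, by omega⟩) htm, rowW2,
        perFn_even_one m hm1 ((tm_double_pred m hm1).1 htm)]
      norm_num
    · have htm' : tm m = tm (m - 1) := by
        have hiff := tm_double_pred m hm1
        have h4 := tm_le_one m
        have h5 := tm_le_one (m - 1)
        have h6 := tm_le_one (2 * m)
        have h7 := tm_le_one (2 * m - 1)
        omega
      rw [h3 (by exact ⟨m, by omega⟩) htm, rowW3, perFn_even_two m hm1 htm']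
      norm_num
  · rw [h1 ho, rowW1, perFn_odd i ho]
    unfold Ei
    push_cast
    ring
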